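/- Let P(t) = Σ_{n≥0} ⟨H̃ⁿ δ_{(e,0)}, δ_{(e,0)}⟩ tⁿ, where e is the identity element of F₂ and δ_{(e,0)} ∈ ℓ²(F₂ × ℕ) is the indicator function of (e,0); this series converges for |t| sufficiently small. Then for all t near 0 one has 1 − 1/P(t) = (1/6)·(5 − √(1 − 4t²) − 2·√(2 − 52t² + 2√(1 − 4t²))), where the branches of the square roots are chosen to be positive at t = 0. -/

import Mathlib

open Metric

noncomputable section

/-- `ℓ²(F₂ × ℕ)`, where `F₂` is the free group on two generators. -/
abbrev l2TreeRays : Type := lp (fun _ : FreeGroup (Fin 2) × ℕ => ℂ) 2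

/-- The delta function at the vertex `(e, 0)`. -/
def deltaE0 : l2TreeRays := lp.single 2 ((1 : FreeGroup (Fin 2)), (0 : ℕ)) (1:ℂ)

open Complex

/-! ### Auxiliary: analytic square root branch -/

/-- Principal analytic square root via `exp (log v / 2)`. -/
def csqrt (v : ℂ) : ℂ := Complex.exp (Complex.log v / 2)

lemma csqrt_sq {v : ℂ} (hv : 0 < v.re) : csqrt v ^ 2 = v := by
  have hv0 : v ≠ 0 := fun h => by rw [h] at hv; simp at hv
  rw [csqrt, sq, ← Complex.exp_add]
  rw [show Complex.log v / 2 + Complex.log v / 2 = Complex.log v by ring]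
  exact Complex.exp_log hv0

lemma mem_slitPlane_of_re_pos {v : ℂ} (hv : 0 < v.re) : v ∈ Complex.slitPlane :=
  Complex.mem_slitPlane_iff.mpr (Or.inl hv)

lemma csqrt_re_pos {v : ℂ} (hv : 0 < v.re) : 0 < (csqrt v).re := by
  rw [csqrt, Complex.exp_re]
  apply mul_pos (Real.exp_pos _)
  have harg : |Complex.arg v| < Real.pi / 2 :=
    Complex.abs_arg_lt_pi_div_two_iff.mpr (Or.inl hv)
  have him : (Complex.log v / 2).im = Complex.arg v / 2 := by
    simp [Complex.div_im, Complex.log_im]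
  rw [him]
  apply Real.cos_pos_of_mem_Ioo
  constructor
  · nlinarith [abs_lt.mp harg, Real.pi_pos]
  · nlinarith [abs_lt.mp harg, Real.pi_pos]

lemma csqrt_analyticAt {v : ℂ} (hv : 0 < v.re) : AnalyticAt ℂ csqrt v := by
  have h1 : AnalyticAt ℂ Complex.log v := analyticAt_clog (mem_slitPlane_of_re_pos hv)
  exact analyticAt_cexp.comp (h1.div analyticAt_const (by norm_num))

lemma sq_eq_sq_re_pos {x y : ℂ} (h : x ^ 2 = y ^ 2) (hx : 0 < x.re) (hy : 0 < y.re) : x = y := by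
  have : (x - y) * (x + y) = 0 := by linear_combination h
  rcases mul_eq_zero.mp this with h' | h'
  · exact sub_eq_zero.mp h'
  · exfalso
    have hxy : x = -y := eq_neg_of_add_eq_zero_left h'
    have := congrArg Complex.re hxy
    simp only [Complex.neg_re] at this
    linarith

/-! ### Auxiliary: free group word lemmas -/

lemma inv_letter (i : Fin 2) (b : Bool) : (FreeGroup.mk [(i, b)])⁻¹ = FreeGroup.mk [(i, !b)] := by
  rw [FreeGroup.inv_mk]; rfl

lemma norm_letter_mul (i : Fin 2) (c : Bool) (h : FreeGroup (Fin 2)) (x : Fin 2) (d : Bool)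
    (tl : List (Fin 2 × Bool)) (hh : h.toWord = (x, d) :: tl) :
    (FreeGroup.mk [(i, c)] * h).norm
      = if i = x ∧ c = !d then tl.length else tl.length + 2 := by
  conv_lhs => rw [← FreeGroup.mk_toWord (x := h)]
  rw [FreeGroup.mul_mk]
  have h2 : ([(i,c)] ++ h.toWord) = (i,c) :: h.toWord := rfl
  rw [h2, FreeGroup.norm, FreeGroup.toWord_mk, FreeGroup.reduce.cons]
  have hred : FreeGroup.reduce h.toWord = (x, d) :: tl := by
    rw [FreeGroup.reduce_toWord, hh]
  rw [hred]
  dsimp only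
  split_ifs with h1
  · rfl
  · simp

lemma norm_mul_letter (g : FreeGroup (Fin 2)) (i : Fin 2) (b : Bool) :
    (g * FreeGroup.mk [(i, b)]).norm = (FreeGroup.mk [(i, !b)] * g⁻¹).norm := by
  rw [← FreeGroup.norm_inv_eq (x := g * FreeGroup.mk [(i, b)]), mul_inv_rev, inv_letter]

lemma neighbor_sum {g : FreeGroup (Fin 2)} (hg : g ≠ 1) (w : ℂ) :
    ∃ m : ℕ, g.norm = m + 1 ∧
      w ^ (g * FreeGroup.of 0).norm + w ^ (g * (FreeGroup.of 0)⁻¹).norm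
        + w ^ (g * FreeGroup.of 1).norm + w ^ (g * (FreeGroup.of 1)⁻¹).norm
      = w ^ m + 3 * w ^ (m + 2) := by
  have hg' : g⁻¹ ≠ 1 := inv_ne_one.mpr hg
  have hnil : g⁻¹.toWord ≠ [] := by
    rw [ne_eq, FreeGroup.toWord_eq_nil_iff]; exact hg'
  obtain ⟨⟨x, d⟩, tl, hh⟩ := List.exists_cons_of_ne_nil hnil
  refine ⟨tl.length, ?_, ?_⟩
  · have : g⁻¹.norm = tl.length + 1 := by
      rw [FreeGroup.norm, hh]; simp
    rwa [FreeGroup.norm_inv_eq] at this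
  · have h0 : g * FreeGroup.of 0 = g * FreeGroup.mk [((0:Fin 2), true)] := rfl
    have h0' : g * (FreeGroup.of 0)⁻¹ = g * FreeGroup.mk [((0:Fin 2), false)] := by
      rw [show (FreeGroup.of (0:Fin 2))⁻¹ = FreeGroup.mk [((0:Fin 2), false)] by
        rw [show FreeGroup.of (0:Fin 2) = FreeGroup.mk [((0:Fin 2), true)] from rfl, inv_letter];
        rfl]
    have h1 : g * FreeGroup.of 1 = g * FreeGroup.mk [((1:Fin 2), true)] := rfl
    have h1' : g * (FreeGroup.of 1)⁻¹ = g * FreeGroup.mk [((1:Fin 2), false)] := by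
      rw [show (FreeGroup.of (1:Fin 2))⁻¹ = FreeGroup.mk [((1:Fin 2), false)] by
        rw [show FreeGroup.of (1:Fin 2) = FreeGroup.mk [((1:Fin 2), true)] from rfl, inv_letter];
        rfl]
    rw [h0, h0', h1, h1', norm_mul_letter, norm_mul_letter, norm_mul_letter, norm_mul_letter,
      norm_letter_mul _ _ _ x d tl hh, norm_letter_mul _ _ _ x d tl hh,
      norm_letter_mul _ _ _ x d tl hh, norm_letter_mul _ _ _ x d tl hh]
    fin_cases x <;> cases d <;> simp <;> ring

/-! ### Auxiliary: summability over the free group -/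

lemma summable_list_pow {c : ℝ} (hc0 : 0 ≤ c) (hc : 4 * c < 1) :
    Summable (fun L : List (Fin 2 × Bool) => c ^ L.length) := by
  have key : Summable (fun s : Σ n : ℕ, Fin n → Fin 2 × Bool => c ^ s.1) := by
    rw [summable_sigma_of_nonneg (fun _ => pow_nonneg hc0 _)]
    constructor
    · intro n; exact Summable.of_finite
    · have h4 : (fun n : ℕ => ∑' _ : Fin n → Fin 2 × Bool, c ^ n)
          = fun n : ℕ => (4 * c) ^ n := by
        funext n
        rw [tsum_fintype]
        simp [Finset.sum_const, mul_pow]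
      rw [h4]
      exact summable_geometric_of_lt_one (by positivity) hc
  have h2 := key.comp_injective (List.equivSigmaTuple (α := Fin 2 × Bool)).injective
  simpa [Function.comp_def] using h2

lemma summable_freegroup_pow {c : ℝ} (hc0 : 0 ≤ c) (hc : 4 * c < 1) :
    Summable (fun g : FreeGroup (Fin 2) => c ^ g.norm) :=
  (summable_list_pow hc0 hc).comp_injective FreeGroup.toWord_injective

/-! ### Real-part estimates -/

lemma re_le_norm (z : ℂ) : z.re ≤ ‖z‖ := by
  exact Complex.re_le_norm z

lemma re_one_sub_four_sq {t : ℂ} (ht : ‖t‖ < 1/8) : 0 < (1 - 4*t^2).re := by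
  have h1 : (t^2).re ≤ ‖t‖^2 := by
    calc (t^2).re ≤ ‖t^2‖ := _root_.re_le_norm _
    _ = ‖t‖^2 := by rw [norm_pow]
  have h2 : (1 - 4*t^2).re = 1 - 4*(t^2).re := by
    simp [Complex.sub_re, Complex.mul_re]
  rw [h2]
  nlinarith [norm_nonneg t]


lemma ray_identity {t s1 z : ℂ} (hs1 : s1^2 = 1 - 4*t^2) (hz : z*(1+s1) = 2*t)
    (hd : (1+s1) ≠ 0) : t*z^2 - z + t = 0 := by
  have h0 : (t*z^2 - z + t) * (1+s1)^2 = 0 := by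
    linear_combination (t*z*(1+s1) + 2*t^2 - (1+s1)) * hz + t * hs1
  rcases mul_eq_zero.mp h0 with h | h
  · exact h
  · exact absurd h (pow_ne_zero 2 hd)

lemma tree_identity {t s1 s2 z w : ℂ} (hs1 : s1^2 = 1 - 4*t^2)
    (hs2 : s2^2 = 2 - 52*t^2 + 2*s1) (hz : z*(1+s1) = 2*t) (hw : w*(1+s1+s2) = 4*t)
    (hd1 : (1+s1) ≠ 0) (hd2 : (1+s1+s2) ≠ 0) : t + 3*t*w^2 + t*w*z - w = 0 := by
  have h0 : (t + 3*t*w^2 + t*w*z - w) * ((1+s1)*(1+s1+s2)^2) = 0 := by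
    linear_combination (3*t*(1+s1)*(w*(1+s1+s2)+4*t) + t*(1+s1)*(1+s1+s2)*z
      - (1+s1)*(1+s1+s2)) * hw + (4*t^2*(1+s1+s2)) * hz
      + (t*((1+s1)+2*s2)) * hs1 + (t*(1+s1)) * hs2
  rcases mul_eq_zero.mp h0 with h | h
  · exact h
  · exact absurd h (mul_ne_zero hd1 (pow_ne_zero 2 hd2))

lemma final_identity {t s1 s2 z w : ℂ} (hs1 : s1^2 = 1 - 4*t^2)
    (hs2 : s2^2 = 2 - 52*t^2 + 2*s1) (hz : z*(1+s1) = 2*t) (hw : w*(1+s1+s2) = 4*t)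
    (hd1 : (1+s1) ≠ 0) (hd2 : (1+s1+s2) ≠ 0) : t*(4*w+z) = (5 - s1 - 2*s2)/6 := by
  have h0 : (t*(4*w+z) - (5 - s1 - 2*s2)/6) * (6*(1+s1)*(1+s1+s2)) = 0 := by
    linear_combination (24*t*(1+s1))*hw + (6*t*(1+s1+s2))*hz
      + ((1+s1)+3*s2)*hs1 + (2*(1+s1))*hs2
  rcases mul_eq_zero.mp h0 with h | h
  · exact sub_eq_zero.mp h
  · exact absurd h (by
      apply mul_ne_zero (mul_ne_zero (by norm_num) hd1) hd2)


set_option maxHeartbeats 1000000 in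
lemma resolvent_solution
    (H : l2TreeRays →L[ℂ] l2TreeRays)
    (hH0 : ∀ (f : l2TreeRays) (g : FreeGroup (Fin 2)),
      H f (g, 0) = f (g * FreeGroup.of 0, 0) + f (g * (FreeGroup.of 0)⁻¹, 0)
        + f (g * FreeGroup.of 1, 0) + f (g * (FreeGroup.of 1)⁻¹, 0) + f (g, 1))
    (hHn : ∀ (f : l2TreeRays) (g : FreeGroup (Fin 2)) (n : ℕ),
      H f (g, n + 1) = f (g, n) + f (g, n + 2))
    (t A w z : ℂ) (hw : ‖w‖ < 1/2) (hz : ‖z‖ < 1)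
    (hray : t*z^2 - z + t = 0)
    (htree : t + 3*t*w^2 + t*w*z - w = 0)
    (hroot : A * (1 - t*(4*w+z)) = 1) :
    ∃ U : l2TreeRays, U ((1:FreeGroup (Fin 2)), 0) = A ∧ (1 - t • H) U = deltaE0 := by
  classical
  set fu : (FreeGroup (Fin 2) × ℕ) → ℂ := fun p => A * w ^ p.1.norm * z ^ p.2 with hfu
  have hmem : Memℓp fu 2 := by
    apply memℓp_gen
    have hconv : ∀ x : ℝ, x ^ ((2:ENNReal).toReal) = x ^ (2:ℕ) := fun x => by
      rw [show ((2:ENNReal).toReal) = ((2:ℕ):ℝ) by norm_num, Real.rpow_natCast]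
    simp only [hconv]
    have h1 : Summable (fun g : FreeGroup (Fin 2) => (‖w‖^2) ^ g.norm) :=
      summable_freegroup_pow (by positivity) (by nlinarith [norm_nonneg w])
    have h2 : Summable (fun n : ℕ => (‖z‖^2) ^ n) :=
      summable_geometric_of_lt_one (by positivity) (by nlinarith [norm_nonneg z])
    have h3 : Summable (fun q : FreeGroup (Fin 2) × ℕ =>
        ((‖w‖^2)^q.1.norm) * ((‖z‖^2)^q.2)) :=
      h1.mul_of_nonneg h2 (fun _ => by positivity) (fun _ => by positivity)
    have hS := h3.mul_left (‖A‖^2)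
    apply hS.congr
    intro q
    simp only [hfu, norm_mul, norm_pow, mul_pow]
    ring
  refine ⟨⟨fu, hmem⟩, ?_, ?_⟩
  · show fu ((1:FreeGroup (Fin 2)), 0) = A
    simp [hfu]
  · set U : l2TreeRays := ⟨fu, hmem⟩ with hUdef
    have hU : (U : ∀ _ : FreeGroup (Fin 2) × ℕ, ℂ) = fu := rfl
    apply lp.ext
    funext p
    obtain ⟨g, n⟩ := p
    have hL : ((1 - t • H) U : ∀ _ : FreeGroup (Fin 2) × ℕ, ℂ) (g,n)
        = U (g,n) - t * (H U) (g,n) := by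
      rw [ContinuousLinearMap.sub_apply, ContinuousLinearMap.one_apply,
        ContinuousLinearMap.smul_apply, lp.coeFn_sub, Pi.sub_apply, lp.coeFn_smul,
        Pi.smul_apply, smul_eq_mul]
    show ((1 - t • H) U : ∀ _ : FreeGroup (Fin 2) × ℕ, ℂ) (g,n)
        = (deltaE0 : ∀ _ : FreeGroup (Fin 2) × ℕ, ℂ) (g,n)
    rw [hL]
    cases n with
    | zero =>
      rw [hH0 U g]
      by_cases hg : g = 1
      · subst hg
        have hδ : (deltaE0 : ∀ _ : FreeGroup (Fin 2) × ℕ, ℂ) ((1:FreeGroup (Fin 2)), 0) = 1 :=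
          lp.single_apply_self 2 _ _
        rw [hδ, hU]
        simp only [hfu, one_mul, FreeGroup.norm_one, FreeGroup.norm_of, FreeGroup.norm_inv_eq,
          pow_zero, pow_one]
        linear_combination hroot
      · have hδ : (deltaE0 : ∀ _ : FreeGroup (Fin 2) × ℕ, ℂ) (g, 0) = 0 :=
          lp.single_apply_ne 2 _ _ (by simp [hg])
        rw [hδ, hU]
        obtain ⟨m, hm, hsum⟩ := neighbor_sum hg w
        simp only [hfu, hm, pow_zero, pow_one]
        linear_combination (-(t*A)) * hsum + (-(A*w^m)) * htree
    | succ n =>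
      rw [hHn U g n]
      have hδ : (deltaE0 : ∀ _ : FreeGroup (Fin 2) × ℕ, ℂ) (g, n+1) = 0 :=
        lp.single_apply_ne 2 _ _ (by simp)
      rw [hδ, hU]
      simp only [hfu]
      linear_combination (-(A * w^(g.norm) * z^n)) * hray

set_option maxHeartbeats 1000000 in
/-- The return generating function `P(t)` of the graph obtained by
attaching a ray to every vertex of the 4-regular tree satisfies
`1 − 1/P(t) = (1/6)(5 − √(1−4t²) − 2√(2−52t²+2√(1−4t²)))` near `t = 0`. -/
theorem tree_with_rays_generating_function
    (H : l2TreeRays →L[ℂ] l2TreeRays) (hHsa : IsSelfAdjoint H)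
    (hH0 : ∀ (f : l2TreeRays) (g : FreeGroup (Fin 2)),
      H f (g, 0) = f (g * FreeGroup.of 0, 0) + f (g * (FreeGroup.of 0)⁻¹, 0)
        + f (g * FreeGroup.of 1, 0) + f (g * (FreeGroup.of 1)⁻¹, 0) + f (g, 1))
    (hHn : ∀ (f : l2TreeRays) (g : FreeGroup (Fin 2)) (n : ℕ),
      H f (g, n + 1) = f (g, n) + f (g, n + 2)) :
    ∃ r : ℝ, 0 < r ∧
      -- analytic branches of the square roots, positive at `t = 0`
      ∃ s₁ s₂ : ℂ → ℂ,
        AnalyticOnNhd ℂ s₁ (ball 0 r) ∧ AnalyticOnNhd ℂ s₂ (ball 0 r)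
        ∧ s₁ 0 = 1 ∧ s₂ 0 = 2
        ∧ (∀ t ∈ ball (0:ℂ) r,
            (s₁ t)^2 = 1 - 4*t^2 ∧ (s₂ t)^2 = 2 - 52*t^2 + 2 * s₁ t)
        ∧ ∀ t ∈ ball (0:ℂ) r,
            ∃ P : ℂ,
              HasSum (fun n : ℕ => (inner ℂ ((H ^ n) deltaE0) deltaE0 : ℂ) * t^n) P
              ∧ 1 - 1/P = (5 - s₁ t - 2 * s₂ t) / 6 := by
  classical
  set s1f : ℂ → ℂ := fun u => csqrt (1 - 4*u^2) with hs1f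
  set s2f : ℂ → ℂ := fun u => csqrt (2 - 52*u^2 + 2 * s1f u) with hs2f
  set r : ℝ := min (1/8) (1/(‖H‖+1)) with hrdef
  have hHpos : (0:ℝ) < ‖H‖ + 1 := by positivity
  have hr : 0 < r := by
    rw [hrdef]; simp only [lt_min_iff]; constructor <;> positivity
  -- basic facts for ‖t‖ < 1/8
  have hq1 : ∀ t : ℂ, ‖t‖ < 1/8 → 0 < (1 - 4*t^2).re := fun t ht => re_one_sub_four_sq ht
  have hs1sq : ∀ t : ℂ, ‖t‖ < 1/8 → (s1f t)^2 = 1 - 4*t^2 := fun t ht => csqrt_sq (hq1 t ht)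
  have hs1re : ∀ t : ℂ, ‖t‖ < 1/8 → 0 < (s1f t).re := fun t ht => csqrt_re_pos (hq1 t ht)
  have hq2 : ∀ t : ℂ, ‖t‖ < 1/8 → 0 < (2 - 52*t^2 + 2 * s1f t).re := by
    intro t ht
    have h1 : (t^2).re ≤ ‖t‖^2 := by
      calc (t^2).re ≤ ‖t^2‖ := _root_.re_le_norm _
      _ = ‖t‖^2 := by rw [norm_pow]
    have h2 : (2 - 52*t^2 + 2 * s1f t).re = 2 - 52*(t^2).re + 2*(s1f t).re := by
      simp [Complex.add_re, Complex.sub_re, Complex.mul_re]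
    rw [h2]
    nlinarith [hs1re t ht, norm_nonneg t]
  have hs2sq : ∀ t : ℂ, ‖t‖ < 1/8 → (s2f t)^2 = 2 - 52*t^2 + 2 * s1f t :=
    fun t ht => csqrt_sq (hq2 t ht)
  have hs2re : ∀ t : ℂ, ‖t‖ < 1/8 → 0 < (s2f t).re := fun t ht => csqrt_re_pos (hq2 t ht)
  have hball : ∀ t : ℂ, t ∈ ball (0:ℂ) r → ‖t‖ < 1/8 ∧ ‖t‖ < 1/(‖H‖+1) := by
    intro t ht
    rw [mem_ball_zero_iff, hrdef, lt_min_iff] at ht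
    exact ht
  refine ⟨r, hr, s1f, s2f, ?_, ?_, ?_, ?_, ?_, ?_⟩
  · -- s1f analytic
    intro t ht
    have ht8 := (hball t ht).1
    have hp : AnalyticAt ℂ (fun u : ℂ => 1 - 4*u^2) t :=
      analyticAt_const.sub (analyticAt_const.mul (analyticAt_id.pow 2))
    rw [hs1f]
    exact AnalyticAt.comp (g := csqrt) (csqrt_analyticAt (hq1 t ht8)) hp
  · -- s2f analytic
    intro t ht
    have ht8 := (hball t ht).1
    have hps1 : AnalyticAt ℂ s1f t := by
      have hp : AnalyticAt ℂ (fun u : ℂ => 1 - 4*u^2) t :=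
        analyticAt_const.sub (analyticAt_const.mul (analyticAt_id.pow 2))
      rw [hs1f]
      exact AnalyticAt.comp (g := csqrt) (csqrt_analyticAt (hq1 t ht8)) hp
    have hp2 : AnalyticAt ℂ (fun u : ℂ => 2 - 52*u^2 + 2 * s1f u) t := by
      exact (analyticAt_const.sub (analyticAt_const.mul (analyticAt_id.pow 2))).add
        (analyticAt_const.mul hps1)
    rw [hs2f]
    exact AnalyticAt.comp (g := csqrt) (csqrt_analyticAt (hq2 t ht8)) hp2
  · -- s1f 0 = 1
    have h0 : ‖(0:ℂ)‖ < 1/8 := by norm_num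
    have h := hs1sq 0 h0
    have : (s1f 0)^2 = (1:ℂ)^2 := by rw [h]; norm_num
    refine sq_eq_sq_re_pos this (hs1re 0 h0) (by norm_num)
  · -- s2f 0 = 2
    have h0 : ‖(0:ℂ)‖ < 1/8 := by norm_num
    have hs10 : s1f 0 = 1 := by
      have h := hs1sq 0 h0
      have : (s1f 0)^2 = (1:ℂ)^2 := by rw [h]; norm_num
      exact sq_eq_sq_re_pos this (hs1re 0 h0) (by norm_num)
    have h := hs2sq 0 h0
    have h4 : (s2f 0)^2 = (2:ℂ)^2 := by rw [h, hs10]; norm_num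
    refine sq_eq_sq_re_pos h4 (hs2re 0 h0) (by norm_num)
  · -- square identities
    intro t ht
    exact ⟨hs1sq t (hball t ht).1, hs2sq t (hball t ht).1⟩
  · -- main statement
    intro t ht
    obtain ⟨ht8, htH⟩ := hball t ht
    have hs1 := hs1sq t ht8
    have hs2 := hs2sq t ht8
    have h1re := hs1re t ht8
    have h2re := hs2re t ht8
    -- denominators
    set d₁ : ℂ := 1 + s1f t with hd₁def
    set d₂ : ℂ := 1 + s1f t + s2f t with hd₂def
    have hd₁re : 1 < d₁.re := by rw [hd₁def]; simp [Complex.add_re]; linarith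
    have hd₂re : 1 < d₂.re := by rw [hd₂def]; simp [Complex.add_re]; linarith
    have hd₁ : d₁ ≠ 0 := fun h => by rw [h] at hd₁re; simp at hd₁re; linarith
    have hd₂ : d₂ ≠ 0 := fun h => by rw [h] at hd₂re; simp at hd₂re; linarith
    have hd₁n : 1 ≤ ‖d₁‖ := le_trans (le_of_lt hd₁re) (_root_.re_le_norm d₁)
    have hd₂n : 1 ≤ ‖d₂‖ := le_trans (le_of_lt hd₂re) (_root_.re_le_norm d₂)
    set z : ℂ := 2*t/d₁ with hzdef
    set w : ℂ := 4*t/d₂ with hwdef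
    have hzn : ‖z‖ ≤ 2*‖t‖ := by
      rw [hzdef, norm_div]
      calc ‖2*t‖/‖d₁‖ ≤ ‖2*t‖ := div_le_self (norm_nonneg _) hd₁n
      _ = 2*‖t‖ := by rw [norm_mul]; norm_num
    have hwn : ‖w‖ ≤ 4*‖t‖ := by
      rw [hwdef, norm_div]
      calc ‖4*t‖/‖d₂‖ ≤ ‖4*t‖ := div_le_self (norm_nonneg _) hd₂n
      _ = 4*‖t‖ := by rw [norm_mul]; norm_num
    have hzlt : ‖z‖ < 1 := by nlinarith [norm_nonneg t]
    have hwlt : ‖w‖ < 1/2 := by nlinarith [norm_nonneg t]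
    have hzd : z * d₁ = 2*t := div_mul_cancel₀ _ hd₁
    have hwd : w * d₂ = 4*t := div_mul_cancel₀ _ hd₂
    -- scalar identities
    have hray : t*z^2 - z + t = 0 :=
      ray_identity hs1 (by rw [← hd₁def]; exact hzd) (by rw [← hd₁def]; exact hd₁)
    have htree : t + 3*t*w^2 + t*w*z - w = 0 :=
      tree_identity hs1 hs2 (by rw [← hd₁def]; exact hzd)
        (by rw [show 1 + s1f t + s2f t = d₂ from hd₂def.symm]; exact hwd)
        (by rw [← hd₁def]; exact hd₁)
        (by rw [show 1 + s1f t + s2f t = d₂ from hd₂def.symm]; exact hd₂)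
    have hfinal : t*(4*w+z) = (5 - s1f t - 2*s2f t)/6 :=
      final_identity hs1 hs2 (by rw [← hd₁def]; exact hzd)
        (by rw [show 1 + s1f t + s2f t = d₂ from hd₂def.symm]; exact hwd)
        (by rw [← hd₁def]; exact hd₁)
        (by rw [show 1 + s1f t + s2f t = d₂ from hd₂def.symm]; exact hd₂)
    -- root coefficient
    set D : ℂ := 1 - t*(4*w+z) with hDdef
    have hDne : D ≠ 0 := by
      have habs : ‖t*(4*w+z)‖ < 1 := by
        calc ‖t*(4*w+z)‖ = ‖t‖*‖4*w+z‖ := norm_mul _ _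
        _ ≤ ‖t‖*(4*‖w‖+‖z‖) := by
            apply mul_le_mul_of_nonneg_left _ (norm_nonneg t)
            calc ‖4*w+z‖ ≤ ‖4*w‖+‖z‖ := norm_add_le _ _
            _ = 4*‖w‖+‖z‖ := by rw [norm_mul]; norm_num
        _ < 1 := by nlinarith [norm_nonneg t]
      intro h
      rw [hDdef, sub_eq_zero] at h
      rw [← h] at habs
      simp at habs
    set A : ℂ := D⁻¹ with hAdef
    have hroot : A * (1 - t*(4*w+z)) = 1 := by
      rw [hAdef, ← hDdef]; exact inv_mul_cancel₀ hDne
    -- the resolvent solution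
    obtain ⟨U, hUval, hUeq⟩ := resolvent_solution H hH0 hHn t A w z hwlt hzlt hray htree hroot
    -- Neumann series
    set x : l2TreeRays →L[ℂ] l2TreeRays := t • H with hxdef
    have hxn : ‖x‖ < 1 := by
      have h2 : ‖t‖ * (‖H‖+1) < (1/(‖H‖+1)) * (‖H‖+1) :=
        mul_lt_mul_of_pos_right htH hHpos
      rw [one_div, inv_mul_cancel₀ (ne_of_gt hHpos)] at h2
      rw [hxdef]
      calc ‖t • H‖ ≤ ‖t‖ * ‖H‖ := norm_smul_le t H
      _ < 1 := by nlinarith [norm_nonneg t, norm_nonneg H]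
    have hS : HasSum (fun n : ℕ => x ^ n) (∑' n : ℕ, x ^ n) :=
      (summable_geometric_of_norm_lt_one hxn).hasSum
    set S : l2TreeRays →L[ℂ] l2TreeRays := ∑' n : ℕ, x ^ n with hSdef
    have hgm : S * (1 - x) = 1 := geom_series_mul_neg x hxn
    have hSd : S deltaE0 = U := by
      calc S deltaE0 = S ((1 - x) U) := by rw [hUeq]
      _ = (S * (1 - x)) U := by rw [ContinuousLinearMap.mul_apply]
      _ = U := by rw [hgm, ContinuousLinearMap.one_apply]
    have h2 : HasSum (fun n : ℕ => (x ^ n) deltaE0) (S deltaE0) := by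
      have := (ContinuousLinearMap.apply ℂ l2TreeRays deltaE0).hasSum hS
      simpa using this
    have h3 : HasSum (fun n : ℕ => (inner ℂ deltaE0 ((x ^ n) deltaE0) : ℂ))
        (inner ℂ deltaE0 (S deltaE0) : ℂ) := by
      have := (innerSL ℂ deltaE0).hasSum h2
      simpa using this
    have hterm : (fun n : ℕ => (inner ℂ ((H ^ n) deltaE0) deltaE0 : ℂ) * t^n)
        = fun n : ℕ => (inner ℂ deltaE0 ((x ^ n) deltaE0) : ℂ) := by
      funext n
      have hpow : x ^ n = t^n • H^n := by rw [hxdef, smul_pow]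
      have hsa : ContinuousLinearMap.adjoint (H ^ n) = H ^ n :=
        ContinuousLinearMap.isSelfAdjoint_iff'.mp (hHsa.pow n)
      calc (inner ℂ ((H^n) deltaE0) deltaE0 : ℂ) * t^n
          = (inner ℂ ((ContinuousLinearMap.adjoint (H^n)) deltaE0) deltaE0 : ℂ) * t^n := by
            rw [hsa]
        _ = (inner ℂ deltaE0 ((H^n) deltaE0) : ℂ) * t^n := by
            rw [ContinuousLinearMap.adjoint_inner_left]
        _ = (inner ℂ deltaE0 ((x^n) deltaE0) : ℂ) := by
            rw [hpow]
            simp only [ContinuousLinearMap.smul_apply, inner_smul_right]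
            ring
    have hPval : (inner ℂ deltaE0 (S deltaE0) : ℂ) = A := by
      rw [hSd, deltaE0, lp.inner_single_left]
      simpa using hUval
    refine ⟨A, ?_, ?_⟩
    · rw [hterm, ← hPval]
      exact h3
    · have hA1 : 1/A = D := by rw [hAdef, one_div, inv_inv]
      rw [hA1, hDdef]
      rw [show (1:ℂ) - (1 - t*(4*w+z)) = t*(4*w+z) by ring]
      exact hfinal

end
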